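/- Replacing g by its leading term (Observation IV): Fix integers 1 ≤ k ≤ n, set α = (kn−2)/2, β = n/2, c = σ_n/2, and g(s) = c ∫_0^s t^{β−1}(1−t)^{−1/2} dt. For ρ > 0 let J_2(δ) = ρ^k ∫_0^δ t^α e^{−ρ g(t)} dt and J_3(δ) = ρ^k ∫_0^δ t^α e^{−ρ (c/β) t^β} dt. Then there exists a constant K > 0 depending only on n such that for all 0 ≤ δ ≤ 1/2 and all ρ > 0, |J_2(δ) − J_3(δ)| ≤ J_3(δ) · (1 − e^{−K ρ δ^{β+1}}). -/

import Mathlib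

open MeasureTheory Set

noncomputable section

/-- `σ_n`, the `(n-1)`-dimensional surface area of the unit sphere `S^{n-1} ⊆ ℝ^n`,
expressed as `n` times the volume of the unit ball in `ℝ^n`. -/
def sphereArea (n : ℕ) : ℝ :=
  n * (volume (Metric.ball (0 : EuclideanSpace ℝ (Fin n)) 1)).toReal

/-- `g(s) = c ∫_0^s t^(β-1) (1-t)^(-1/2) dt` with `c = σ_n/2` and `β = n/2`:
the area of the spherical cap on `S^n` whose Euclidean radius is `√s`. -/
def gFun (n : ℕ) (s : ℝ) : ℝ :=
  (sphereArea n / 2) * ∫ t in (0:ℝ)..s, t ^ ((n:ℝ)/2 - 1) * (1 - t) ^ (-(1:ℝ)/2)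

/-- `J₁(δ) = ρ^k ∫_0^δ t^α (1-t)^{α'} e^{-ρ g(t)} dt`,
with `α = (kn-2)/2` and `α' = (n-k-1)/2`. -/
def J₁ (n k : ℕ) (ρ δ : ℝ) : ℝ :=
  ρ ^ k * ∫ t in (0:ℝ)..δ,
    t ^ ((((k*n : ℕ) : ℝ) - 2) / 2) * (1 - t) ^ (((n:ℝ) - (k:ℝ) - 1) / 2) *
      Real.exp (-ρ * gFun n t)

/-- `J₂(δ) = ρ^k ∫_0^δ t^α e^{-ρ g(t)} dt`, with `α = (kn-2)/2`. -/
def J₂ (n k : ℕ) (ρ δ : ℝ) : ℝ :=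
  ρ ^ k * ∫ t in (0:ℝ)..δ,
    t ^ ((((k*n : ℕ) : ℝ) - 2) / 2) * Real.exp (-ρ * gFun n t)

/-- `J₃(δ) = ρ^k ∫_0^δ t^α e^{-ρ (c/β) t^β} dt`, with `α = (kn-2)/2`, `β = n/2`,
`c = σ_n/2`. -/
def J₃ (n k : ℕ) (ρ δ : ℝ) : ℝ :=
  ρ ^ k * ∫ t in (0:ℝ)..δ,
    t ^ ((((k*n : ℕ) : ℝ) - 2) / 2) *
      Real.exp (-ρ * ((sphereArea n / 2) / ((n:ℝ)/2)) * t ^ ((n:ℝ)/2))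

/-!
On `[0, 1/2]` the factor `(1 - t)^(-1/2)` in the integrand of `g` lies between `1` and `1 + t`,
so `(c/β) s^β ≤ g(s) ≤ (c/β) s^β + K s^(β+1)` with `K = c/(β+1)`. Hence for `0 ≤ t ≤ δ`
`e^{-ρ (c/β) t^β} e^{-K ρ δ^(β+1)} ≤ e^{-ρ g(t)} ≤ e^{-ρ (c/β) t^β}`, and integrating against
`ρ^k t^α` gives `J₃ e^{-K ρ δ^(β+1)} ≤ J₂ ≤ J₃`.
-/

lemma rpow_neg_half_one_sub_le {s : ℝ} (hs0 : 0 ≤ s) (hs : s ≤ 1/2) :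
    (1 - s) ^ (-(1:ℝ)/2) ≤ 1 + s := by
  have hsq : ((1 + s) ^ 2)⁻¹ ≤ 1 - s := by
    rw [inv_le_iff_one_le_mul₀ (by positivity)]
    nlinarith [mul_nonneg hs0 (mul_nonneg hs0 hs0)]
  calc (1 - s) ^ (-(1:ℝ)/2) ≤ (((1 + s) ^ 2)⁻¹) ^ (-(1:ℝ)/2) :=
        Real.rpow_le_rpow_of_nonpos (by positivity) hsq (by norm_num)
    _ = 1 + s := by
        rw [← Real.rpow_natCast, ← Real.rpow_neg (by positivity), ← Real.rpow_mul (by positivity)]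
        norm_num

lemma neg_one_lt_cast_sub_two_div_two {m : ℕ} (hm : 0 < m) : -1 < ((m : ℝ) - 2) / 2 := by
  have : (1:ℝ) ≤ m := by exact_mod_cast hm
  linarith

lemma integral_rpow_sub_one_of_pos {β s : ℝ} (hβ : 0 < β) :
    ∫ t in (0:ℝ)..s, t ^ (β - 1) = s ^ β / β := by
  rw [integral_rpow (Or.inl (by linarith)), sub_add_cancel, Real.zero_rpow hβ.ne', sub_zero]

lemma intervalIntegrable_rpow_mul_of_continuousOn {α δ : ℝ} {φ : ℝ → ℝ} (hα : -1 < α)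
    (hδ : 0 ≤ δ) (hφ : ContinuousOn φ (Icc 0 δ)) :
    IntervalIntegrable (fun t => t ^ α * φ t) volume 0 δ :=
  (intervalIntegral.intervalIntegrable_rpow' hα).mul_continuousOn (by rwa [uIcc_of_le hδ])

section CapIntegrand

variable {β s : ℝ}

lemma intervalIntegrable_capIntegrand (hβ : 0 < β) (hs0 : 0 ≤ s) (hs : s < 1) :
    IntervalIntegrable (fun t => t ^ (β - 1) * (1 - t) ^ (-(1:ℝ)/2)) volume 0 s :=
  intervalIntegrable_rpow_mul_of_continuousOn (by linarith) hs0 <|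
    ContinuousOn.rpow_const (by fun_prop) fun t ht => Or.inl (by linarith [ht.2])

lemma integral_capIntegrand_ge (hβ : 0 < β) (hs0 : 0 ≤ s) (hs : s < 1) :
    s ^ β / β ≤ ∫ t in (0:ℝ)..s, t ^ (β - 1) * (1 - t) ^ (-(1:ℝ)/2) := by
  rw [← integral_rpow_sub_one_of_pos hβ]
  refine intervalIntegral.integral_mono_on hs0
    (intervalIntegral.intervalIntegrable_rpow' (by linarith))
    (intervalIntegrable_capIntegrand hβ hs0 hs) fun t ht => ?_
  exact le_mul_of_one_le_right (Real.rpow_nonneg ht.1 _)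
    (Real.one_le_rpow_of_pos_of_le_one_of_nonpos (by linarith [ht.2]) (by linarith [ht.1])
      (by norm_num))

lemma integral_capIntegrand_le (hβ : 0 < β) (hs0 : 0 ≤ s) (hs : s ≤ 1/2) :
    ∫ t in (0:ℝ)..s, t ^ (β - 1) * (1 - t) ^ (-(1:ℝ)/2) ≤ s ^ β / β + s ^ (β + 1) / (β + 1) := by
  have hβ' : 0 < β + 1 := by linarith
  have hint := integral_rpow_sub_one_of_pos (s := s) hβ'
  rw [add_sub_cancel_right] at hint
  rw [← integral_rpow_sub_one_of_pos hβ, ← hint, ← intervalIntegral.integral_add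
    (intervalIntegral.intervalIntegrable_rpow' (by linarith))
    (intervalIntegral.intervalIntegrable_rpow' (by linarith))]
  refine intervalIntegral.integral_mono_on hs0 (intervalIntegrable_capIntegrand hβ hs0 (by linarith))
    ((intervalIntegral.intervalIntegrable_rpow' (by linarith)).add
      (intervalIntegral.intervalIntegrable_rpow' (by linarith))) fun t ht => ?_
  calc t ^ (β - 1) * (1 - t) ^ (-(1:ℝ)/2) ≤ t ^ (β - 1) * (1 + t) :=
        mul_le_mul_of_nonneg_left (rpow_neg_half_one_sub_le ht.1 (ht.2.trans hs))
          (Real.rpow_nonneg ht.1 _)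
    _ = t ^ (β - 1) + t ^ β := by
        rw [mul_one_add, ← Real.rpow_add_one' ht.1 (by linarith), sub_add_cancel]

end CapIntegrand

lemma sphereArea_pos {n : ℕ} (hn : 0 < n) : 0 < sphereArea n := by
  have := ENNReal.toReal_pos
    (Metric.measure_ball_pos volume (0 : EuclideanSpace ℝ (Fin n)) one_pos).ne'
    measure_ball_lt_top.ne
  unfold sphereArea
  positivity

section Cap

variable {n : ℕ} {s : ℝ}

lemma gFun_ge (hn : 0 < n) (hs0 : 0 ≤ s) (hs : s < 1) :
    sphereArea n / 2 / ((n:ℝ)/2) * s ^ ((n:ℝ)/2) ≤ gFun n s := by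
  rw [gFun, div_mul_eq_mul_div, mul_div_assoc]
  have := sphereArea_pos hn
  exact mul_le_mul_of_nonneg_left (integral_capIntegrand_ge (by positivity) hs0 hs) (by positivity)

lemma gFun_le (hn : 0 < n) (hs0 : 0 ≤ s) (hs : s ≤ 1/2) :
    gFun n s ≤ sphereArea n / 2 / ((n:ℝ)/2) * s ^ ((n:ℝ)/2) +
      sphereArea n / 2 / ((n:ℝ)/2 + 1) * s ^ ((n:ℝ)/2 + 1) := by
  have := sphereArea_pos hn
  calc gFun n s ≤ sphereArea n / 2 *
        (s ^ ((n:ℝ)/2) / ((n:ℝ)/2) + s ^ ((n:ℝ)/2 + 1) / ((n:ℝ)/2 + 1)) :=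
        mul_le_mul_of_nonneg_left (integral_capIntegrand_le (by positivity) hs0 hs) (by positivity)
    _ = _ := by ring

lemma continuousOn_gFun (hn : 0 < n) : ContinuousOn (gFun n) (Icc 0 (1/2)) := by
  have hprim := intervalIntegral.continuousOn_primitive_interval'
    (intervalIntegrable_capIntegrand (β := (n:ℝ)/2) (by positivity) (by norm_num)
      (by norm_num : (1:ℝ)/2 < 1)) left_mem_uIcc
  rw [uIcc_of_le (by norm_num)] at hprim
  exact continuousOn_const.mul hprim

end Cap

section Exponentials

variable {n : ℕ} {ρ δ t : ℝ}

lemma exp_neg_mul_gFun_le (hn : 0 < n) (hρ : 0 ≤ ρ) (ht0 : 0 ≤ t) (ht : t < 1) :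
    Real.exp (-ρ * gFun n t) ≤
      Real.exp (-ρ * (sphereArea n / 2 / ((n:ℝ)/2)) * t ^ ((n:ℝ)/2)) := by
  rw [Real.exp_le_exp, mul_assoc]
  exact mul_le_mul_of_nonpos_left (gFun_ge hn ht0 ht) (neg_nonpos.mpr hρ)

lemma exp_mul_exp_le_exp_neg_mul_gFun (hn : 0 < n) (hρ : 0 ≤ ρ) (ht0 : 0 ≤ t) (htδ : t ≤ δ)
    (hδ : δ ≤ 1/2) :
    Real.exp (-ρ * (sphereArea n / 2 / ((n:ℝ)/2)) * t ^ ((n:ℝ)/2)) *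
        Real.exp (-(sphereArea n / 2 / ((n:ℝ)/2 + 1) * ρ * δ ^ ((n:ℝ)/2 + 1))) ≤
      Real.exp (-ρ * gFun n t) := by
  rw [← Real.exp_add, Real.exp_le_exp]
  have hK : 0 ≤ sphereArea n / 2 / ((n:ℝ)/2 + 1) * ρ := by
    have := sphereArea_pos hn
    positivity
  have hpow : t ^ ((n:ℝ)/2 + 1) ≤ δ ^ ((n:ℝ)/2 + 1) :=
    Real.rpow_le_rpow ht0 htδ (by positivity)
  nlinarith [mul_le_mul_of_nonneg_left (gFun_le hn ht0 (htδ.trans hδ)) hρ,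
    mul_le_mul_of_nonneg_left hpow hK]

end Exponentials

section Integrals

variable {n k : ℕ} {ρ δ : ℝ}

lemma intervalIntegrable_J₂_integrand (hn : 0 < n) (hkn : 0 < k * n) (hδ0 : 0 ≤ δ)
    (hδ : δ ≤ 1/2) :
    IntervalIntegrable (fun t => t ^ ((((k*n : ℕ) : ℝ) - 2) / 2) * Real.exp (-ρ * gFun n t))
      volume 0 δ :=
  intervalIntegrable_rpow_mul_of_continuousOn (neg_one_lt_cast_sub_two_div_two hkn) hδ0 <|
    (continuousOn_const.mul ((continuousOn_gFun hn).mono (Icc_subset_Icc le_rfl hδ))).rexp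

lemma intervalIntegrable_J₃_integrand (hkn : 0 < k * n) (hδ0 : 0 ≤ δ) :
    IntervalIntegrable (fun t => t ^ ((((k*n : ℕ) : ℝ) - 2) / 2) *
      Real.exp (-ρ * ((sphereArea n / 2) / ((n:ℝ)/2)) * t ^ ((n:ℝ)/2))) volume 0 δ :=
  intervalIntegrable_rpow_mul_of_continuousOn (neg_one_lt_cast_sub_two_div_two hkn) hδ0 <|
    (continuousOn_const.mul
      (ContinuousOn.rpow_const continuousOn_id fun _ _ => Or.inr (by positivity))).rexp

lemma J₂_le_J₃ (hn : 0 < n) (hkn : 0 < k * n) (hρ : 0 ≤ ρ) (hδ0 : 0 ≤ δ) (hδ : δ ≤ 1/2) :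
    J₂ n k ρ δ ≤ J₃ n k ρ δ := by
  refine mul_le_mul_of_nonneg_left (intervalIntegral.integral_mono_on hδ0
    (intervalIntegrable_J₂_integrand hn hkn hδ0 hδ) (intervalIntegrable_J₃_integrand hkn hδ0)
    fun t ht => ?_) (pow_nonneg hρ k)
  exact mul_le_mul_of_nonneg_left (exp_neg_mul_gFun_le hn hρ ht.1 (by linarith [ht.2]))
    (Real.rpow_nonneg ht.1 _)

lemma J₃_mul_exp_le_J₂ (hn : 0 < n) (hkn : 0 < k * n) (hρ : 0 ≤ ρ) (hδ0 : 0 ≤ δ)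
    (hδ : δ ≤ 1/2) :
    J₃ n k ρ δ * Real.exp (-(sphereArea n / 2 / ((n:ℝ)/2 + 1) * ρ * δ ^ ((n:ℝ)/2 + 1))) ≤
      J₂ n k ρ δ := by
  rw [J₃, mul_assoc, ← intervalIntegral.integral_mul_const]
  refine mul_le_mul_of_nonneg_left (intervalIntegral.integral_mono_on hδ0
    ((intervalIntegrable_J₃_integrand hkn hδ0).mul_const _)
    (intervalIntegrable_J₂_integrand hn hkn hδ0 hδ) fun t ht => ?_) (pow_nonneg hρ k)
  rw [mul_assoc]
  exact mul_le_mul_of_nonneg_left (exp_mul_exp_le_exp_neg_mul_gFun hn hρ ht.1 ht.2 hδ)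
    (Real.rpow_nonneg ht.1 _)

end Integrals

/-- **Replacing `g` by its leading term (Observation IV).**
There is a constant `K > 0` depending only on `n` such that
`|J₂(δ) - J₃(δ)| ≤ J₃(δ) (1 - e^{-K ρ δ^{β+1}})` for all `0 ≤ δ ≤ 1/2`, `ρ > 0`. -/
theorem replace_g (n k : ℕ) (hk : 1 ≤ k) (hkn : k ≤ n) :
    ∃ K : ℝ, 0 < K ∧ ∀ δ ∈ Icc (0:ℝ) (1/2), ∀ ρ : ℝ, 0 < ρ →
      |J₂ n k ρ δ - J₃ n k ρ δ| ≤
        J₃ n k ρ δ * (1 - Real.exp (-(K * ρ * δ ^ ((n:ℝ)/2 + 1)))) := by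
  have hn : 0 < n := by omega
  have hkn' : 0 < k * n := Nat.mul_pos hk hn
  refine ⟨sphereArea n / 2 / ((n:ℝ)/2 + 1), by have := sphereArea_pos hn; positivity, ?_⟩
  rintro δ ⟨hδ0, hδ⟩ ρ hρ
  have hlo := J₃_mul_exp_le_J₂ (k := k) hn hkn' hρ.le hδ0 hδ
  have hhi := J₂_le_J₃ hn hkn' hρ.le hδ0 hδ
  rw [abs_sub_comm, abs_of_nonneg (sub_nonneg.mpr hhi), mul_one_sub]
  linarith
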